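/- Let n be even and t < n, and let S be a t-pseudo-border of [n] of minimum cardinality. Then for any family of subsets T_1, ..., T_m of [n], each with 2 ≤ |T_i| ≤ t−1, the family obtained from S by successively taking symmetric differences with N(T_1), ..., N(T_m) has cardinality at least |S|. -/

import Mathlib

/-!
Flipping a `t`-pseudo-border `S` along `N(T)` with `2 ≤ |T| ≤ t - 1` gives again a
`t`-pseudo-border: `∅ ∉ N(T)` since `|T| ≥ 2`, every member of `N(T)` has size at most
`|T| + 1 ≤ t`, and the parity conditions survive because `|N(T) ∩ N(T')|` is always even when
`n` is. For `T = T'` this is `|N(T)| = n`; otherwise `A ↦ A ∆ (T ∆ T')` is a fixed-point-free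
involution of `N(T) ∩ N(T')`. Iterating, every family obtained by such flips is a pseudo-border,
so it is no smaller than a minimum one.
-/

/-- The neighbourhood of a subset `S` of `[n]` in the hypercube. -/
def hypercubeNbhd (n : ℕ) (S : Finset (Fin n)) : Finset (Finset (Fin n)) :=
  Finset.univ.filter (fun T => (symmDiff S T).card = 1)

/-- A `t`-pseudo-border of the hypercube `[n]`. -/
def IsPseudoBorder (n t : ℕ) (S : Finset (Finset (Fin n))) : Prop :=
  ∅ ∈ S ∧
  (∀ T : Finset (Fin n), T.card ≤ t - 1 → Even ((S ∩ hypercubeNbhd n T).card)) ∧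
  (∀ A ∈ S, A.card ≤ t)

open Finset
open scoped symmDiff

namespace Finset

variable {α : Type*} [DecidableEq α]

lemma card_symmDiff_add_two_mul_card_inter (A B : Finset α) :
    #(A ∆ B) + 2 * #(A ∩ B) = #A + #B := by
  have hsub : A ∩ B ⊆ A ∪ B := inter_subset_left.trans subset_union_left
  rw [symmDiff_eq_sup_sdiff_inf, sup_eq_union, inf_eq_inter, card_sdiff_of_subset hsub,
    ← card_union_add_card_inter A B]
  have := card_le_card hsub
  omega

lemma even_card_symmDiff {A B : Finset α} (hA : Even #A) (hB : Even #B) : Even #(A ∆ B) := by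
  have h := card_symmDiff_add_two_mul_card_inter A B
  rw [Nat.even_iff] at *
  omega

lemma card_symmDiff_le (A B : Finset α) : #(A ∆ B) ≤ #A + #B :=
  (card_le_card symmDiff_le_sup).trans (card_union_le A B)

/-- Translation by a nonempty `D` swaps the sets containing a fixed `x ∈ D` with those that
do not. -/
lemma even_card_of_symmDiff_mem {s : Finset (Finset α)} {D : Finset α} (hD : D.Nonempty)
    (hs : ∀ A ∈ s, A ∆ D ∈ s) : Even #s := by
  obtain ⟨x, hx⟩ := hD
  have hflip : ∀ A : Finset α, x ∈ A ∆ D ↔ x ∉ A := fun A => by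
    simp [mem_symmDiff, hx]
  have hswap : #(s.filter (x ∈ ·)) = #(s.filter (x ∉ ·)) := by
    refine card_nbij' (· ∆ D) (· ∆ D) ?_ ?_ ?_ ?_
    · intro A hA
      rw [mem_coe, mem_filter] at hA ⊢
      exact ⟨hs A hA.1, fun h => (hflip A).1 h hA.2⟩
    · intro A hA
      rw [mem_coe, mem_filter] at hA ⊢
      exact ⟨hs A hA.1, (hflip A).2 hA.2⟩
    · exact fun A _ => symmDiff_symmDiff_cancel_right D A
    · exact fun A _ => symmDiff_symmDiff_cancel_right D A
  rw [← card_filter_add_card_filter_not (x ∈ ·), hswap]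
  exact ⟨_, rfl⟩

end Finset

section Hypercube

variable {n : ℕ}

lemma mem_hypercubeNbhd {T A : Finset (Fin n)} : A ∈ hypercubeNbhd n T ↔ #(T ∆ A) = 1 := by
  simp [hypercubeNbhd]

lemma hypercubeNbhd_eq_image (T : Finset (Fin n)) :
    hypercubeNbhd n T = univ.image fun i => T ∆ {i} := by
  ext A
  simp only [mem_hypercubeNbhd, mem_image, mem_univ, true_and, card_eq_one]
  constructor
  · rintro ⟨i, hi⟩
    exact ⟨i, by rw [← hi, symmDiff_symmDiff_cancel_left]⟩
  · rintro ⟨i, rfl⟩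
    exact ⟨i, symmDiff_symmDiff_cancel_left T {i}⟩

lemma card_hypercubeNbhd (T : Finset (Fin n)) : #(hypercubeNbhd n T) = n := by
  rw [hypercubeNbhd_eq_image,
    card_image_of_injective _ fun i j h => singleton_injective (symmDiff_right_injective T h),
    card_univ, Fintype.card_fin]

lemma even_card_hypercubeNbhd_inter (hn : Even n) (T T' : Finset (Fin n)) :
    Even #(hypercubeNbhd n T ∩ hypercubeNbhd n T') := by
  rcases eq_or_ne T T' with rfl | hne
  · rwa [inter_self, card_hypercubeNbhd]
  refine even_card_of_symmDiff_mem (D := T ∆ T')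
    (nonempty_iff_ne_empty.2 (symmDiff_eq_bot.not.2 hne)) fun A hA => ?_
  rw [mem_inter, mem_hypercubeNbhd, mem_hypercubeNbhd] at hA ⊢
  have hswap : ∀ U V : Finset (Fin n), U ∆ (A ∆ (U ∆ V)) = V ∆ A := fun U V => by
    rw [symmDiff_left_comm, symmDiff_symmDiff_cancel_left, symmDiff_comm]
  rw [hswap, symmDiff_comm T T', hswap]
  exact hA.symm

lemma card_le_of_mem_hypercubeNbhd {T A : Finset (Fin n)} (hA : A ∈ hypercubeNbhd n T) :
    #A ≤ #T + 1 := by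
  rw [mem_hypercubeNbhd] at hA
  calc #A = #(T ∆ (T ∆ A)) := by rw [symmDiff_symmDiff_cancel_left]
    _ ≤ #T + 1 := hA ▸ card_symmDiff_le T (T ∆ A)

lemma empty_notMem_hypercubeNbhd {T : Finset (Fin n)} (hT : 2 ≤ #T) :
    ∅ ∉ hypercubeNbhd n T := by
  rw [mem_hypercubeNbhd, ← bot_eq_empty, symmDiff_bot]
  omega

end Hypercube

namespace IsPseudoBorder

variable {n t : ℕ} {S : Finset (Finset (Fin n))}

lemma symmDiff_hypercubeNbhd (hn : Even n) (hS : IsPseudoBorder n t S) {T : Finset (Fin n)}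
    (hT₂ : 2 ≤ #T) (hTt : #T ≤ t - 1) : IsPseudoBorder n t (S ∆ hypercubeNbhd n T) := by
  obtain ⟨hempty, hpar, hsize⟩ := hS
  refine ⟨mem_symmDiff.2 (Or.inl ⟨hempty, empty_notMem_hypercubeNbhd hT₂⟩), fun T' hT' => ?_,
    fun A hA => ?_⟩
  · rw [← inf_eq_inter, inf_symmDiff_distrib_right]
    exact even_card_symmDiff (hpar T' hT') (even_card_hypercubeNbhd_inter hn T T')
  · rcases mem_symmDiff.1 hA with ⟨hA, -⟩ | ⟨hA, -⟩
    · exact hsize A hA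
    · have := card_le_of_mem_hypercubeNbhd hA
      omega

lemma foldl_symmDiff_hypercubeNbhd (hn : Even n) (hS : IsPseudoBorder n t S)
    {L : List (Finset (Fin n))} (hL : ∀ T ∈ L, 2 ≤ #T ∧ #T ≤ t - 1) :
    IsPseudoBorder n t (L.foldl (fun A T => A ∆ hypercubeNbhd n T) S) := by
  induction L generalizing S with
  | nil => exact hS
  | cons T L ih =>
    have hT := hL T List.mem_cons_self
    exact ih (hS.symmDiff_hypercubeNbhd hn hT.1 hT.2) fun T' hT' =>
      hL T' (List.mem_cons_of_mem T hT')

end IsPseudoBorder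

theorem flip_min_pseudoBorder_general (n t : ℕ) (hn : Even n)
    (S : Finset (Finset (Fin n))) (hS : IsPseudoBorder n t S)
    (hmin : ∀ S' : Finset (Finset (Fin n)), IsPseudoBorder n t S' → S.card ≤ S'.card)
    (L : List (Finset (Fin n))) (hL : ∀ T ∈ L, 2 ≤ T.card ∧ T.card ≤ t - 1) :
    S.card ≤ (L.foldl (fun A T => symmDiff A (hypercubeNbhd n T)) S).card :=
  hmin _ (hS.foldl_symmDiff_hypercubeNbhd hn hL)

/-- If `S` is a minimum-cardinality `t`-pseudo-border of `[n]` (`n` even,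
`t < n`), then successively flipping `S` along any sets `T_1, …, T_m` with
`2 ≤ |T_i| ≤ t - 1` yields a family of cardinality at least `|S|`. -/
theorem flip_min_pseudoBorder (n t : ℕ) (hn : Even n) (ht : t < n)
    (S : Finset (Finset (Fin n))) (hS : IsPseudoBorder n t S)
    (hmin : ∀ S' : Finset (Finset (Fin n)), IsPseudoBorder n t S' → S.card ≤ S'.card)
    (L : List (Finset (Fin n))) (hL : ∀ T ∈ L, 2 ≤ T.card ∧ T.card ≤ t - 1) :
    S.card ≤ (L.foldl (fun A T => symmDiff A (hypercubeNbhd n T)) S).card :=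
  flip_min_pseudoBorder_general n t hn S hS hmin L hL
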